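/- Let η(n, m) denote the largest divisor of n all of whose prime factors divide m. If C has spectrum kernel B, then for any positive integer a, the collection aC = (a·x_1, ..., a·x_r) has spectrum kernel {b·η(a, b) : b ∈ B}. -/

import Mathlib

open Finset

/-- `p` is a period length for the collection of positions `x`. -/
def IsPeriodLen (r : ℕ) [NeZero r] (x : Fin r → ℕ) (p : ℕ) : Prop :=
  0 < p ∧ ∃ L : ℕ → ZMod 2, L ≠ 0 ∧
    (∀ i, (∀ l, x l - x 0 ≤ i) →
      L i = ∑ l ∈ Finset.univ.erase (0 : Fin r), L (i - (x l - x 0))) ∧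
    (∀ i, L (i + p) = L i) ∧
    ∀ d, 0 < d → (∀ i, L (i + d) = L i) → p ≤ d

/-- The caSpectrum of a collection: the set of its period lengths. -/
def caSpectrum (r : ℕ) [NeZero r] (x : Fin r → ℕ) : Set ℕ :=
  {p | IsPeriodLen r x p}

/-- The kernel of a caSpectrum: its divisibility-minimal elements. -/
def kernel (S : Set ℕ) : Set ℕ :=
  {y ∈ S | ∀ z ∈ S, z ≠ y → ¬ z ∣ y}

/-- `eta n m`: the largest divisor of `n` all of whose prime factors divide `m`. -/
def eta (n m : ℕ) : ℕ :=
  ((n.divisors).filter (fun d => ∀ p ∈ d.primeFactors, p ∣ m)).sup id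

/-!
A solution `M` for the scaled positions `a * x` interleaves the `a` sequences `k ↦ M (a * k + j)`,
each a solution for `x`; a period `q` of `M` gives them the period `q / gcd a q`, so some `b` in the
spectrum of `x` has `b * gcd a q ∣ q`, which forces `b * η(a, b) ∣ q`. Conversely, a solution `L` for
`x` of minimal period `b` yields one for `a * x` of minimal period `n = b * η(a, b)`: stretch `L` by
`η` (for `b > 1` this multiplies the minimal period by `η`), then read it along `i ↦ c * i`, where
`c` inverts `a / η` modulo `n`; this is possible because `η` is maximal, so `a / η` is coprime to
`n`. Since `b ↦ b * η(a, b)` preserves and reflects divisibility, the two facts match the kernels.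
-/

open Function

theorem Nat.prime_of_mem_support_filter_factorization {n p : ℕ} {P : ℕ → Prop} [DecidablePred P]
    (hp : p ∈ (n.factorization.filter P).support) : p.Prime :=
  Nat.prime_of_mem_primeFactors (mem_filter.1 hp).1

section Eta

variable {a b : ℕ}

theorem eta_eq_prod_pow (ha : a ≠ 0) :
    eta a b = (a.factorization.filter (· ∣ b)).prod (· ^ ·) := by
  set f := a.factorization.filter (· ∣ b)
  have hprime : ∀ p ∈ f.support, p.Prime := fun _ => Nat.prime_of_mem_support_filter_factorization
  have hfac : (f.prod (· ^ ·)).factorization = f := Nat.prod_pow_factorization_eq_self hprime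
  have hne : f.prod (· ^ ·) ≠ 0 :=
    Finsupp.prod_ne_zero_iff.2 fun p hp => pow_ne_zero _ (hprime p hp).ne_zero
  have hmem : f.prod (· ^ ·) ∈ a.divisors.filter (fun d => ∀ p ∈ d.primeFactors, p ∣ b) := by
    refine mem_filter.2 ⟨Nat.mem_divisors.2 ⟨?_, ha⟩, fun p hp => ?_⟩
    · rw [← Nat.factorization_le_iff_dvd hne ha, hfac]
      intro p
      rw [Finsupp.filter_apply]
      split_ifs <;> simp
    · rw [← Nat.support_factorization, hfac] at hp
      exact (mem_filter.1 hp).2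
  refine le_antisymm (Finset.sup_le fun d hd => ?_) (Finset.le_sup (f := id) hmem)
  obtain ⟨⟨hda, -⟩, hdb⟩ := by simpa only [mem_filter, Nat.mem_divisors] using hd
  have hd0 : d ≠ 0 := ne_zero_of_dvd_ne_zero ha hda
  refine Nat.le_of_dvd (Nat.pos_of_ne_zero hne) ((Nat.factorization_le_iff_dvd hd0 hne).1 ?_)
  intro p
  rw [hfac, Finsupp.filter_apply]
  split_ifs with hpb
  · exact (Nat.factorization_le_iff_dvd hd0 ha).2 hda p
  · by_contra h
    exact hpb (hdb p (Nat.support_factorization d ▸ Finsupp.mem_support_iff.2 (by omega)))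

theorem factorization_eta (ha : a ≠ 0) (p : ℕ) :
    (eta a b).factorization p = if p ∣ b then a.factorization p else 0 := by
  rw [eta_eq_prod_pow ha, Nat.prod_pow_factorization_eq_self fun _ =>
    Nat.prime_of_mem_support_filter_factorization, Finsupp.filter_apply]

theorem eta_ne_zero (ha : a ≠ 0) : eta a b ≠ 0 := by
  rw [eta_eq_prod_pow ha]
  exact Finsupp.prod_ne_zero_iff.2 fun _ hp =>
    pow_ne_zero _ (Nat.prime_of_mem_support_filter_factorization hp).ne_zero

theorem eta_dvd (ha : a ≠ 0) : eta a b ∣ a := by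
  rw [← Nat.factorization_le_iff_dvd (eta_ne_zero ha) ha]
  intro p
  rw [factorization_eta ha]
  split_ifs <;> simp

theorem eta_one (ha : a ≠ 0) : eta a 1 = 1 := by
  refine Nat.eq_of_factorization_eq (eta_ne_zero ha) one_ne_zero fun p => ?_
  rw [factorization_eta ha, Nat.factorization_one]
  split_ifs with hp <;> simp_all

theorem coprime_div_eta_mul_eta (ha : a ≠ 0) : (a / eta a b).Coprime (b * eta a b) := by
  refine Nat.coprime_of_dvd fun p hp hpa hpb => ?_
  have hpb' : p ∣ b := by
    refine (hp.dvd_mul.1 hpb).elim id fun hpη => ?_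
    by_contra hn
    have := (hp.dvd_iff_one_le_factorization (eta_ne_zero ha)).1 hpη
    rw [factorization_eta ha, if_neg hn] at this
    omega
  have hquot : a / eta a b ≠ 0 :=
    (Nat.div_pos (Nat.le_of_dvd (Nat.pos_of_ne_zero ha) (eta_dvd ha))
      (Nat.pos_of_ne_zero (eta_ne_zero ha))).ne'
  have := (hp.dvd_iff_one_le_factorization hquot).1 hpa
  rw [Nat.factorization_div (eta_dvd ha), Finsupp.tsub_apply, factorization_eta ha,
    if_pos hpb'] at this
  omega

theorem factorization_mul_eta (ha : a ≠ 0) (hb : b ≠ 0) (p : ℕ) :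
    (b * eta a b).factorization p = b.factorization p + if p ∣ b then a.factorization p else 0 := by
  rw [Nat.factorization_mul hb (eta_ne_zero ha), Finsupp.add_apply, factorization_eta ha]

theorem mul_eta_dvd_mul_eta_iff {b₁ b₂ : ℕ} (ha : a ≠ 0) (h₁ : b₁ ≠ 0) (h₂ : b₂ ≠ 0) :
    b₁ * eta a b₁ ∣ b₂ * eta a b₂ ↔ b₁ ∣ b₂ := by
  rw [← Nat.factorization_le_iff_dvd (mul_ne_zero h₁ (eta_ne_zero ha))
    (mul_ne_zero h₂ (eta_ne_zero ha)), ← Nat.factorization_le_iff_dvd h₁ h₂]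
  refine forall_congr' fun p => ?_
  rw [factorization_mul_eta ha h₁, factorization_mul_eta ha h₂]
  by_cases hp : p.Prime
  · have hd₁ := hp.dvd_iff_one_le_factorization h₁
    have hd₂ := hp.dvd_iff_one_le_factorization h₂
    split_ifs <;> omega
  · simp [Nat.factorization_eq_zero_of_not_prime _ hp]

theorem mul_eta_dvd_of_mul_gcd_dvd {q : ℕ} (ha : a ≠ 0) (hb : b ≠ 0) (hq : q ≠ 0)
    (h : b * a.gcd q ∣ q) : b * eta a b ∣ q := by
  have hg : a.gcd q ≠ 0 := Nat.gcd_ne_zero_left ha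
  rw [← Nat.factorization_le_iff_dvd (mul_ne_zero hb hg) hq] at h
  rw [← Nat.factorization_le_iff_dvd (mul_ne_zero hb (eta_ne_zero ha)) hq]
  intro p
  have hp := h p
  rw [Nat.factorization_mul hb hg, Nat.factorization_gcd ha hq, Finsupp.add_apply,
    Finsupp.inf_apply] at hp
  rw [factorization_mul_eta ha hb]
  by_cases hpr : p.Prime
  · have hd := hpr.dvd_iff_one_le_factorization hb
    split_ifs <;> omega
  · simp [Nat.factorization_eq_zero_of_not_prime _ hpr]

end Eta

section MinPeriod

variable {α : Type*}

def IsMinPeriod (L : ℕ → α) (p : ℕ) : Prop :=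
  0 < p ∧ Periodic L p ∧ ∀ d, 0 < d → Periodic L d → p ≤ d

variable {L : ℕ → α} {p : ℕ}

theorem IsMinPeriod.dvd (hL : IsMinPeriod L p) {d : ℕ} (hd : Periodic L d) : p ∣ d := by
  obtain ⟨hp, hper, hmin⟩ := hL
  have hmod : Periodic L (d % p) := fun i => by
    have h := hper.nat_mul (d / p) (i + d % p)
    rw [Nat.cast_id, add_assoc, Nat.mod_add_div', hd] at h
    exact h.symm
  by_contra hpd
  exact absurd (hmin _ (Nat.pos_of_ne_zero (mt Nat.dvd_of_mod_eq_zero hpd)) hmod)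
    (not_le.2 (Nat.mod_lt d hp))

theorem Function.Periodic.exists_isMinPeriod_dvd {d : ℕ} (hd : 0 < d) (hL : Periodic L d) :
    ∃ p, IsMinPeriod L p ∧ p ∣ d := by
  classical
  have hex : ∃ p, 0 < p ∧ Periodic L p := ⟨d, hd, hL⟩
  have hmin : IsMinPeriod L (Nat.find hex) :=
    ⟨(Nat.find_spec hex).1, (Nat.find_spec hex).2, fun d hd hdL => Nat.find_min' hex ⟨hd, hdL⟩⟩
  exact ⟨_, hmin, hmin.dvd hL⟩

theorem Function.Periodic.eq_of_natCast_eq {n i j : ℕ} (hL : Periodic L n)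
    (hij : (i : ZMod n) = j) : L i = L j := by
  rw [← hL.map_mod_nat i, ← hL.map_mod_nat j, (ZMod.natCast_eq_natCast_iff' i j n).1 hij]

theorem IsMinPeriod.comp_div_of_one_lt (hL : IsMinPeriod L p) (hp : 1 < p) {η : ℕ} (hη : 0 < η) :
    IsMinPeriod (fun i => L (i / η)) (p * η) := by
  have hblock : ∀ m v, v < η → (η * m + v) / η = m := fun m v hv => by
    rw [add_comm, Nat.add_mul_div_left _ _ hη, Nat.div_eq_of_lt hv, zero_add]
  refine ⟨Nat.mul_pos (by omega) hη, fun i => ?_, fun d hd hper => ?_⟩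
  · simp only [Nat.add_mul_div_right _ _ hη, hL.2.1 (i / η)]
  obtain ⟨t, u, hu, rfl⟩ : ∃ t u, u < η ∧ d = η * t + u :=
    ⟨d / η, d % η, Nat.mod_lt d hη, (Nat.div_add_mod d η).symm⟩
  have ht : Periodic L t := fun m => by
    have := hper (η * m)
    dsimp only at this
    rwa [show η * m + (η * t + u) = η * (m + t) + u by ring, hblock _ _ hu,
      Nat.mul_div_cancel_left m hη] at this
  have hu0 : u = 0 := by
    by_contra hu0
    have ht1 : Periodic L (t + 1) := fun m => by
      have := hper (η * m + (η - u))
      dsimp only at this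
      rwa [show η * m + (η - u) + (η * t + u) = η * (m + (t + 1)) by
          rw [Nat.mul_add η m, Nat.mul_add η t]; omega,
        Nat.mul_div_cancel_left _ hη, hblock _ _ (by omega)] at this
    have h1 : p ∣ 1 := (Nat.dvd_add_right (hL.dvd ht)).1 (hL.dvd ht1)
    exact absurd (Nat.le_of_dvd one_pos h1) (by omega)
  subst hu0
  have htp : p ≤ t := hL.2.2 t (Nat.pos_of_ne_zero fun h => by simp [h] at hd) ht
  rw [add_zero, mul_comm η]
  exact Nat.mul_le_mul_right η htp

theorem Function.Periodic.apply_mul_mul_of_mul_eq_one {n c a' : ℕ} (hL : Periodic L n)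
    (hc : (c * a' : ZMod n) = 1) (k : ℕ) : L (c * (a' * k)) = L k :=
  hL.eq_of_natCast_eq (by push_cast; rw [← mul_assoc, hc, one_mul])

theorem IsMinPeriod.comp_mul {c a' : ℕ} (hL : IsMinPeriod L p) (hc : (c * a' : ZMod p) = 1) :
    IsMinPeriod (fun i => L (c * i)) p := by
  have hinv := hL.2.1.apply_mul_mul_of_mul_eq_one hc
  refine ⟨hL.1, fun i => ?_, fun d hd hper => hL.2.2 d hd fun k => ?_⟩
  · show L (c * (i + p)) = L (c * i)
    rw [mul_add]
    exact hL.2.1.nat_mul c (c * i)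
  · rw [← hinv (k + d), ← hinv k, mul_add]
    exact hper.nat_mul a' (a' * k)

end MinPeriod

section Recurrence

variable {ι α : Type*} [AddCommMonoid α] {s : Finset ι}

def SatisfiesRecurrence (s : Finset ι) (D : ι → ℕ) (L : ℕ → α) : Prop :=
  ∀ i, (∀ l, D l ≤ i) → L i = ∑ l ∈ s, L (i - D l)

theorem SatisfiesRecurrence.comp_mul_add {D : ι → ℕ} {M : ℕ → α} {a : ℕ}
    (hM : SatisfiesRecurrence s (fun l => a * D l) M) (j : ℕ) :
    SatisfiesRecurrence s D (fun k => M (a * k + j)) := by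
  intro k hk
  have hle : ∀ l, a * D l ≤ a * k := fun l => Nat.mul_le_mul_left a (hk l)
  show M (a * k + j) = ∑ l ∈ s, M (a * (k - D l) + j)
  rw [hM (a * k + j) fun l => (hle l).trans (Nat.le_add_right _ _)]
  refine sum_congr rfl fun l _ => congrArg M ?_
  have := hle l
  dsimp only
  rw [Nat.mul_sub]
  omega

theorem SatisfiesRecurrence.comp_div {D : ι → ℕ} {L : ℕ → α} {η : ℕ}
    (hL : SatisfiesRecurrence s D L) (hη : 0 < η) :
    SatisfiesRecurrence s (fun l => η * D l) (fun i => L (i / η)) := by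
  intro i hi
  have hle : ∀ l, D l ≤ i / η := fun l => (Nat.le_div_iff_mul_le hη).2 (by rw [mul_comm]; exact hi l)
  simp only [Nat.sub_mul_div, hL (i / η) hle]

theorem SatisfiesRecurrence.comp_mul [Finite ι] {E F : ι → ℕ} {N : ℕ → α} {n c : ℕ}
    (hN : SatisfiesRecurrence s E N) (hper : Periodic N n) (hn : 0 < n)
    (hEF : ∀ l, (c * F l : ZMod n) = E l) :
    SatisfiesRecurrence s F (fun i => N (c * i)) := by
  intro i hi
  obtain ⟨K, hK⟩ := Finite.exists_le E
  have hE : ∀ l, E l ≤ c * i + n * K := fun l =>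
    (hK l).trans ((Nat.le_mul_of_pos_left K hn).trans (Nat.le_add_left _ _))
  -- Shifting `c * i` by a multiple of `n` makes every subtraction `· - E l` exact.
  show N (c * i) = ∑ l ∈ s, N (c * (i - F l))
  rw [hper.eq_of_natCast_eq (j := c * i + n * K) (by simp), hN _ hE]
  refine sum_congr rfl fun l _ => hper.eq_of_natCast_eq ?_
  push_cast [Nat.cast_sub (hE l), Nat.cast_sub (hi l)]
  rw [mul_sub, hEF]
  simp

end Recurrence

section Spectrum

variable {r : ℕ} [NeZero r] {x : Fin r → ℕ}

theorem isPeriodLen_iff {p : ℕ} :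
    IsPeriodLen r x p ↔ ∃ L : ℕ → ZMod 2, L ≠ 0 ∧
      SatisfiesRecurrence (univ.erase 0) (fun l => x l - x 0) L ∧ IsMinPeriod L p :=
  ⟨fun ⟨hp, L, h0, hrec, hper, hmin⟩ => ⟨L, h0, hrec, hp, hper, hmin⟩,
    fun ⟨L, h0, hrec, hp, hper, hmin⟩ => ⟨hp, L, h0, hrec, hper, hmin⟩⟩

theorem isPeriodLen_mul_iff {a p : ℕ} :
    IsPeriodLen r (fun i => a * x i) p ↔ ∃ L : ℕ → ZMod 2, L ≠ 0 ∧
      SatisfiesRecurrence (univ.erase 0) (fun l => a * (x l - x 0)) L ∧ IsMinPeriod L p := by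
  simp only [isPeriodLen_iff, Nat.mul_sub]

theorem ne_zero_of_mem_caSpectrum {p : ℕ} (hp : p ∈ caSpectrum r x) : p ≠ 0 := hp.1.ne'

theorem exists_mem_caSpectrum_mul_gcd_dvd {a q : ℕ}
    (hq : q ∈ caSpectrum r (fun i => a * x i)) : ∃ b ∈ caSpectrum r x, b * a.gcd q ∣ q := by
  obtain ⟨M, hM0, hrec, hq0, hper, -⟩ := isPeriodLen_mul_iff.1 hq
  obtain ⟨i₀, hi₀⟩ := Function.ne_iff.1 hM0
  set L : ℕ → ZMod 2 := fun k => M (a * k + i₀ % a)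
  have hL0 : L ≠ 0 := Function.ne_iff.2 ⟨i₀ / a, by simpa [L, Nat.div_add_mod] using hi₀⟩
  set g := a.gcd q
  obtain ⟨a', ha'⟩ : g ∣ a := Nat.gcd_dvd_left a q
  obtain ⟨q', hq'⟩ : g ∣ q := Nat.gcd_dvd_right a q
  have hq'0 : 0 < q' := Nat.pos_of_ne_zero fun h => hq0.ne' (by rw [hq', h, mul_zero])
  have hLper : Periodic L q' := fun k => by
    have hshift : a * (k + q') + i₀ % a = a * k + i₀ % a + a' * q := by
      rw [ha', hq']
      ring
    show M (a * (k + q') + i₀ % a) = M (a * k + i₀ % a)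
    rw [hshift]
    exact hper.nat_mul a' _
  obtain ⟨b, hb, hbq'⟩ := hLper.exists_isMinPeriod_dvd hq'0
  refine ⟨b, isPeriodLen_iff.2 ⟨L, hL0, hrec.comp_mul_add _, hb⟩, ?_⟩
  rw [hq', mul_comm g]
  exact Nat.mul_dvd_mul_right hbq' g

theorem mul_eta_mem_caSpectrum_mul {a b : ℕ} (ha : a ≠ 0) (hb : b ∈ caSpectrum r x) :
    b * eta a b ∈ caSpectrum r (fun i => a * x i) := by
  obtain ⟨L, hL0, hrec, hL⟩ := isPeriodLen_iff.1 hb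
  set η := eta a b
  set n := b * η
  have hη : 0 < η := Nat.pos_of_ne_zero (eta_ne_zero ha)
  have hN : IsMinPeriod (fun i => L (i / η)) n := by
    rcases (Nat.one_le_iff_ne_zero.2 hL.1.ne').eq_or_lt with hb1 | hb1
    · subst hb1
      simpa [n, η, eta_one ha] using hL
    · exact hL.comp_div_of_one_lt hb1 hη
  have : NeZero n := ⟨hN.1.ne'⟩
  set a₂ := a / η
  set c := ((a₂ : ZMod n)⁻¹).val
  have hc : (c * a₂ : ZMod n) = 1 := by
    rw [ZMod.natCast_zmod_val, mul_comm]
    exact ZMod.coe_mul_inv_eq_one a₂ (coprime_div_eta_mul_eta ha)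
  have ha₂ : a = η * a₂ := (Nat.mul_div_cancel' (eta_dvd ha)).symm
  have hrecM : SatisfiesRecurrence (univ.erase 0) (fun l => a * (x l - x 0))
      (fun i => L (c * i / η)) :=
    (hrec.comp_div hη).comp_mul hN.2.1 hN.1 fun l => by
      rw [ha₂]
      push_cast
      linear_combination (η * (x l - x 0 : ℕ) : ZMod n) * hc
  have hM0 : (fun i => L (c * i / η)) ≠ 0 := fun h => hL0 <| funext fun k => by
    have hk := hN.2.1.apply_mul_mul_of_mul_eq_one hc (η * k)
    rw [Nat.mul_div_cancel_left k hη] at hk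
    rw [← hk]
    exact congrFun h _
  exact isPeriodLen_mul_iff.2 ⟨_, hM0, hrecM, hN.comp_mul hc⟩

end Spectrum

theorem kernel_eq_image_of_dvd_iff {S T : Set ℕ} {φ : ℕ → ℕ} (hmaps : Set.MapsTo φ S T)
    (hdvd : ∀ b₁ ∈ S, ∀ b₂ ∈ S, φ b₁ ∣ φ b₂ ↔ b₁ ∣ b₂) (hcover : ∀ q ∈ T, ∃ b ∈ S, φ b ∣ q) :
    kernel T = φ '' kernel S := by
  ext q
  constructor
  · rintro ⟨hqT, hqmin⟩
    obtain ⟨b, hbS, hbq⟩ := hcover q hqT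
    have hbq' : φ b = q := by_contra fun h => hqmin _ (hmaps hbS) h hbq
    refine ⟨b, ⟨hbS, fun z hzS hzb hzdvd => ?_⟩, hbq'⟩
    have hzq : φ z = q :=
      by_contra fun h => hqmin _ (hmaps hzS) h (hbq' ▸ (hdvd z hzS b hbS).2 hzdvd)
    exact hzb (Nat.dvd_antisymm hzdvd ((hdvd b hbS z hzS).1 (by rw [hzq, hbq'])))
  · rintro ⟨b, ⟨hbS, hbmin⟩, rfl⟩
    refine ⟨hmaps hbS, fun z hzT hzb hzdvd => ?_⟩
    obtain ⟨b', hb'S, hb'z⟩ := hcover z hzT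
    obtain rfl : b' = b :=
      by_contra fun h => hbmin b' hb'S h ((hdvd b' hb'S b hbS).1 (hb'z.trans hzdvd))
    exact hzb (Nat.dvd_antisymm hzdvd hb'z)

theorem stmt18_general (r a : ℕ) [NeZero r] (ha : 0 < a) (x : Fin r → ℕ) :
    kernel (caSpectrum r (fun i => a * x i)) =
      (fun b => b * eta a b) '' kernel (caSpectrum r x) := by
  refine kernel_eq_image_of_dvd_iff (fun b hb => mul_eta_mem_caSpectrum_mul ha.ne' hb)
    (fun b₁ h₁ b₂ h₂ => mul_eta_dvd_mul_eta_iff ha.ne' (ne_zero_of_mem_caSpectrum h₁)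
      (ne_zero_of_mem_caSpectrum h₂)) fun q hq => ?_
  obtain ⟨b, hb, hbq⟩ := exists_mem_caSpectrum_mul_gcd_dvd hq
  exact ⟨b, hb, mul_eta_dvd_of_mul_gcd_dvd ha.ne' (ne_zero_of_mem_caSpectrum hb)
    (ne_zero_of_mem_caSpectrum hq) hbq⟩

theorem stmt18 (r a : ℕ) [NeZero r] (ha : 0 < a) (x : Fin r → ℕ)
    (hmono : StrictMono x) :
    kernel (caSpectrum r (fun i => a * x i)) =
      (fun b => b * eta a b) '' kernel (caSpectrum r x) :=
  stmt18_general r a ha x
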